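/- If a graph G is the clique sum of two graphs G₁ and G₂ (i.e., G = (V₁∪V₂, E₁∪E₂) where V₁∩V₂ induces a clique in both G₁ and G₂), then gd(G) = max{gd(G₁), gd(G₂)}. -/

import Mathlib

/-- `Y` agrees with `X` on all diagonal entries and all entries indexed by edges of `G`. -/
def agreesOn {V : Type*} (G : SimpleGraph V) (X Y : Matrix V V ℝ) : Prop :=
  (∀ i, Y i i = X i i) ∧ ∀ i j, G.Adj i j → Y i j = X i j

/-- `gramDimLE G k` : every psd matrix indexed by `V` admits a psd matrix of rank at most `k`
agreeing with it on the diagonal and on the edges of `G`. -/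
def gramDimLE {V : Type*} [Fintype V] (G : SimpleGraph V) (k : ℕ) : Prop :=
  ∀ X : Matrix V V ℝ, X.PosSemidef →
    ∃ Y : Matrix V V ℝ, Y.PosSemidef ∧ Y.rank ≤ k ∧ agreesOn G X Y

/-- The Gram dimension of a graph. -/
noncomputable def gramDim {V : Type*} [Fintype V] (G : SimpleGraph V) : ℕ :=
  sInf {k | gramDimLE G k}

/-!
A psd matrix of rank at most `k` is exactly the Gram matrix of `k`-dimensional vectors, so
`gd(G) ≤ k` asks for vectors in `ℝᵏ` reproducing the prescribed inner products on the diagonal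
and the edges. For the clique sum, take such vectors for the restrictions of `X` to `V₁` and
`V₂`. On the clique `V₁ ∩ V₂` every entry is prescribed, so the two families have the same Gram
matrix there and hence differ by a linear isometry of `ℝᵏ`; moving the second family by it glues
the two into one family for `G`. Conversely a completion for `G` restricts to completions for
the pieces, since every psd matrix indexed by `Vᵢ` extends to a psd matrix indexed by `V`.
-/

open Matrix Module Submodule Set
open scoped InnerProductSpace ComplexOrder

section GramMatrix

variable {𝕜 E F ι : Type*} [RCLike 𝕜]
  [NormedAddCommGroup E] [InnerProductSpace 𝕜 E] [NormedAddCommGroup F] [InnerProductSpace 𝕜 F]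

theorem exists_linearIsometry_of_finrank_le [FiniteDimensional 𝕜 E] [FiniteDimensional 𝕜 F]
    (h : finrank 𝕜 E ≤ finrank 𝕜 F) : Nonempty (E →ₗᵢ[𝕜] F) := by
  let b := (stdOrthonormalBasis 𝕜 E).toBasis
  let b' := stdOrthonormalBasis 𝕜 F
  let f := b.constr 𝕜 (b' ∘ Fin.castLE h)
  have hf : f ∘ b = b' ∘ Fin.castLE h := funext fun i => b.constr_basis 𝕜 _ i
  refine ⟨f.isometryOfOrthonormal (v := b) ?_ ?_⟩
  · simpa only [b, OrthonormalBasis.coe_toBasis] using (stdOrthonormalBasis 𝕜 E).orthonormal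
  · rw [hf]; exact b'.orthonormal.comp _ (Fin.castLE_injective h)

theorem Matrix.gram_comp_linearIsometry (L : E →ₗᵢ[𝕜] F) (v : ι → E) :
    gram 𝕜 (L ∘ v) = gram 𝕜 v :=
  Matrix.ext fun i j => L.inner_map_map (v i) (v j)

theorem Matrix.rank_gram_eq_finrank_span [Fintype ι] [FiniteDimensional 𝕜 E] (v : ι → E) :
    (gram 𝕜 v).rank = finrank 𝕜 (span 𝕜 (range v)) := by
  let b := stdOrthonormalBasis 𝕜 E
  let e := b.repr.toLinearEquiv.trans (WithLp.linearEquiv 2 𝕜 (Fin (finrank 𝕜 E) → 𝕜))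
  rw [gram_eq_conjTranspose_mul b v, rank_conjTranspose_mul_self, rank_eq_finrank_span_cols,
    ← LinearEquiv.finrank_map_eq e, Submodule.map_span, ← Set.range_comp]
  rfl

theorem Matrix.rank_gram_le_finrank [Fintype ι] [FiniteDimensional 𝕜 E] (v : ι → E) :
    (gram 𝕜 v).rank ≤ finrank 𝕜 E :=
  (rank_gram_eq_finrank_span v).trans_le (Submodule.finrank_le _)

theorem Matrix.PosSemidef.exists_gram_eq [Fintype ι] {X : Matrix ι ι 𝕜} (hX : X.PosSemidef) :
    ∃ v : ι → EuclideanSpace 𝕜 ι, gram 𝕜 v = X := by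
  classical
  open scoped MatrixOrder in
  obtain ⟨B, rfl⟩ := CStarAlgebra.nonneg_iff_eq_star_mul_self.mp hX.nonneg
  refine ⟨fun j => WithLp.toLp 2 (B.col j), ?_⟩
  rw [gram_eq_conjTranspose_mul (EuclideanSpace.basisFun ι 𝕜)]
  rfl

theorem inner_linearCombination_eq_of_gram_eq [Fintype ι] {v : ι → E} {w : ι → F}
    (h : gram 𝕜 v = gram 𝕜 w) (x y : ι → 𝕜) :
    ⟪Fintype.linearCombination 𝕜 v x, Fintype.linearCombination 𝕜 v y⟫_𝕜 =
      ⟪Fintype.linearCombination 𝕜 w x, Fintype.linearCombination 𝕜 w y⟫_𝕜 := by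
  simp only [Fintype.linearCombination_apply, ← star_dotProduct_gram_mulVec, h]

theorem exists_linearIsometry_span_of_gram_eq [Fintype ι] {v : ι → E} {w : ι → F}
    (h : gram 𝕜 v = gram 𝕜 w) :
    ∃ L : span 𝕜 (range v) →ₗᵢ[𝕜] F, ∀ i, L ⟨v i, subset_span (mem_range_self i)⟩ = w i := by
  classical
  set cv := Fintype.linearCombination 𝕜 v
  set cw := Fintype.linearCombination 𝕜 w
  have hnorm (x : ι → 𝕜) : ‖cw x‖ = ‖cv x‖ := by
    rw [← sq_eq_sq₀ (norm_nonneg _) (norm_nonneg _), ← RCLike.ofReal_inj (K := 𝕜)]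
    push_cast
    rw [← inner_self_eq_norm_sq_to_K, ← inner_self_eq_norm_sq_to_K,
      inner_linearCombination_eq_of_gram_eq h]
  have hker : LinearMap.ker cv ≤ LinearMap.ker cw := fun x hx => by
    rw [LinearMap.mem_ker, ← norm_eq_zero, hnorm, norm_eq_zero, ← LinearMap.mem_ker]
    exact hx
  -- `T` sends `cv x` to `cw x`; it is well defined because `cw` vanishes on the kernel of `cv`
  let T : LinearMap.range cv →ₗ[𝕜] F :=
    (LinearMap.ker cv).liftQ cw hker ∘ₗ cv.quotKerEquivRange.symm.toLinearMap
  have hT (x : ι → 𝕜) : T ⟨cv x, LinearMap.mem_range_self cv x⟩ = cw x := by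
    simp [T, LinearMap.quotKerEquivRange_symm_apply_image]
  let L : LinearMap.range cv →ₗᵢ[𝕜] F :=
    ⟨T, by rintro ⟨_, x, rfl⟩; rw [hT, hnorm]; rfl⟩
  let e := LinearIsometryEquiv.ofEq _ _ (Fintype.range_linearCombination 𝕜 v).symm
  refine ⟨L.comp e.toLinearIsometry, fun i => ?_⟩
  have hTi := hT (Pi.single i 1)
  simp only [cv, cw, Fintype.linearCombination_apply_single, one_smul] at hTi
  exact hTi

theorem exists_linearIsometry_comp_eq_of_gram_eq [Finite ι] [FiniteDimensional 𝕜 E]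
    {v w : ι → E} (h : gram 𝕜 v = gram 𝕜 w) : ∃ O : E →ₗᵢ[𝕜] E, O ∘ v = w := by
  have := Fintype.ofFinite ι
  obtain ⟨L, hL⟩ := exists_linearIsometry_span_of_gram_eq h
  exact ⟨L.extend, funext fun i => (L.extend_apply _).trans (hL i)⟩

theorem Matrix.PosSemidef.exists_gram_eq_of_rank_le [Fintype ι] {X : Matrix ι ι 𝕜}
    (hX : X.PosSemidef) {k : ℕ} (hk : X.rank ≤ k) :
    ∃ v : ι → EuclideanSpace 𝕜 (Fin k), gram 𝕜 v = X := by
  obtain ⟨c, rfl⟩ := hX.exists_gram_eq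
  let c' : ι → span 𝕜 (range c) := fun i => ⟨c i, subset_span (mem_range_self i)⟩
  obtain ⟨L⟩ := exists_linearIsometry_of_finrank_le (𝕜 := 𝕜) (E := span 𝕜 (range c))
    (F := EuclideanSpace 𝕜 (Fin k))
    (by rwa [finrank_euclideanSpace_fin, ← rank_gram_eq_finrank_span])
  refine ⟨L ∘ c', ?_⟩
  rw [gram_comp_linearIsometry, ← gram_comp_linearIsometry (span 𝕜 (range c)).subtypeₗᵢ]
  rfl

theorem Matrix.posSemidef_and_rank_le_iff [Fintype ι] {X : Matrix ι ι 𝕜} {k : ℕ} :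
    X.PosSemidef ∧ X.rank ≤ k ↔ ∃ v : ι → EuclideanSpace 𝕜 (Fin k), gram 𝕜 v = X := by
  refine ⟨fun ⟨hX, hk⟩ => hX.exists_gram_eq_of_rank_le hk, ?_⟩
  rintro ⟨v, rfl⟩
  exact ⟨posSemidef_gram 𝕜 v, by simpa using rank_gram_le_finrank (𝕜 := 𝕜) v⟩

theorem Matrix.PosSemidef.exists_submatrix_eq {κ : Type*} [Fintype ι] [Fintype κ]
    {X : Matrix κ κ 𝕜} (hX : X.PosSemidef) {f : κ → ι} (hf : f.Injective) :
    ∃ Y : Matrix ι ι 𝕜, Y.PosSemidef ∧ Y.submatrix f f = X := by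
  obtain ⟨c, rfl⟩ := hX.exists_gram_eq
  refine ⟨gram 𝕜 (Function.extend f c 0), posSemidef_gram 𝕜 _, ?_⟩
  change gram 𝕜 (Function.extend f c 0 ∘ f) = _
  rw [Function.extend_comp hf]

theorem exists_glue_of_gram_eq_on_inter {V : Type*} [Finite V] [FiniteDimensional 𝕜 E]
    {V₁ V₂ : Set V} (hcover : V₁ ∪ V₂ = univ) (u : V₁ → E) (w : V₂ → E)
    (h : gram 𝕜 (w ∘ inclusion inter_subset_right) = gram 𝕜 (u ∘ inclusion inter_subset_left)) :
    ∃ v : V → E, v ∘ (↑) = u ∧ gram 𝕜 (v ∘ ((↑) : V₂ → V)) = gram 𝕜 w := by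
  classical
  obtain ⟨O, hO⟩ := exists_linearIsometry_comp_eq_of_gram_eq h
  have mem₂ {i : V} (hi : i ∉ V₁) : i ∈ V₂ :=
    ((hcover ▸ mem_univ i) : i ∈ V₁ ∪ V₂).resolve_left hi
  let v : V → E := fun i => if hi : i ∈ V₁ then u ⟨i, hi⟩ else O (w ⟨i, mem₂ hi⟩)
  have hv₂ : v ∘ (↑) = O ∘ w := by
    ext1 ⟨i, hi₂⟩
    by_cases hi₁ : i ∈ V₁
    · simpa [v, hi₁] using (congrFun hO ⟨i, hi₁, hi₂⟩).symm
    · simp [v, hi₁]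
  refine ⟨v, funext fun i => by simp [v, i.2], ?_⟩
  rw [hv₂, gram_comp_linearIsometry]

end GramMatrix

section Graph

variable {V W : Type*} {G G' : SimpleGraph V} {X Y : Matrix V V ℝ}

theorem agreesOn.mono (h : agreesOn G X Y) (hG : G' ≤ G) : agreesOn G' X Y :=
  ⟨h.1, fun i j hij => h.2 i j (hG hij)⟩

theorem agreesOn.comap (h : agreesOn G X Y) (f : W → V) :
    agreesOn (G.comap f) (X.submatrix f f) (Y.submatrix f f) :=
  ⟨fun i => h.1 (f i), fun i j hij => h.2 (f i) (f j) hij⟩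

theorem agreesOn.submatrix_eq (h : agreesOn G X Y) {f : W → V}
    (hf : ∀ a b, a ≠ b → G.Adj (f a) (f b)) : Y.submatrix f f = X.submatrix f f := by
  ext a b
  obtain rfl | hab := eq_or_ne a b
  exacts [h.1 (f a), h.2 _ _ (hf a b hab)]

theorem agreesOn_sup {G₁ G₂ : SimpleGraph V} {V₁ V₂ : Set V} (hcover : V₁ ∪ V₂ = univ)
    (hE₁ : ∀ u v, G₁.Adj u v → u ∈ V₁ ∧ v ∈ V₁) (hE₂ : ∀ u v, G₂.Adj u v → u ∈ V₂ ∧ v ∈ V₂)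
    (h₁ : agreesOn (G₁.induce V₁) (X.submatrix (↑) (↑)) (Y.submatrix (↑) (↑)))
    (h₂ : agreesOn (G₂.induce V₂) (X.submatrix (↑) (↑)) (Y.submatrix (↑) (↑))) :
    agreesOn (G₁ ⊔ G₂) X Y := by
  refine ⟨fun i => ?_, fun i j hij => ?_⟩
  · rcases (hcover ▸ mem_univ i : i ∈ V₁ ∪ V₂) with hi | hi
    exacts [h₁.1 ⟨i, hi⟩, h₂.1 ⟨i, hi⟩]
  · rcases hij with hij | hij
    · exact h₁.2 ⟨i, (hE₁ i j hij).1⟩ ⟨j, (hE₁ i j hij).2⟩ hij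
    · exact h₂.2 ⟨i, (hE₂ i j hij).1⟩ ⟨j, (hE₂ i j hij).2⟩ hij

variable [Fintype V] {k l : ℕ}

theorem gramDimLE_iff_exists_gram :
    gramDimLE G k ↔ ∀ X : Matrix V V ℝ, X.PosSemidef →
      ∃ v : V → EuclideanSpace ℝ (Fin k), agreesOn G X (gram ℝ v) := by
  refine forall₂_congr fun X _ => ⟨?_, ?_⟩
  · rintro ⟨Y, hY, hk, hXY⟩
    obtain ⟨v, rfl⟩ := posSemidef_and_rank_le_iff.mp ⟨hY, hk⟩
    exact ⟨v, hXY⟩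
  · rintro ⟨v, hXv⟩
    obtain ⟨hv, hk⟩ := posSemidef_and_rank_le_iff.mpr ⟨v, rfl⟩
    exact ⟨gram ℝ v, hv, hk, hXv⟩

theorem gramDimLE.mono (h : gramDimLE G k) (hkl : k ≤ l) : gramDimLE G l := fun X hX =>
  let ⟨Y, hY, hk, hXY⟩ := h X hX
  ⟨Y, hY, hk.trans hkl, hXY⟩

theorem gramDimLE.anti (h : gramDimLE G k) (hG : G' ≤ G) : gramDimLE G' k := fun X hX =>
  let ⟨Y, hY, hk, hXY⟩ := h X hX
  ⟨Y, hY, hk, hXY.mono hG⟩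

theorem gramDimLE.induce (h : gramDimLE G k) (S : Set V) [Fintype S] :
    gramDimLE (G.induce S) k := fun X hX => by
  obtain ⟨Z, hZ, rfl⟩ := hX.exists_submatrix_eq Subtype.val_injective
  obtain ⟨Y, hY, hk, hZY⟩ := h Z hZ
  exact ⟨Y.submatrix (↑) (↑), hY.submatrix _, (rank_submatrix_le _ _ _).trans hk,
    hZY.comap (Function.Embedding.subtype _)⟩

theorem gramDimLE_card (G : SimpleGraph V) : gramDimLE G (Fintype.card V) := fun X hX =>
  ⟨X, hX, X.rank_le_card_height, fun _ => rfl, fun _ _ _ => rfl⟩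

theorem gramDim_le_iff : gramDim G ≤ k ↔ gramDimLE G k :=
  ⟨fun h => (Nat.sInf_mem (s := {k | gramDimLE G k}) ⟨_, gramDimLE_card G⟩).mono h,
    fun h => Nat.sInf_le h⟩

theorem gramDimLE_sup_of_isClique {G₁ G₂ : SimpleGraph V} {V₁ V₂ : Set V}
    [Fintype V₁] [Fintype V₂] (hcover : V₁ ∪ V₂ = univ)
    (hE₁ : ∀ u v, G₁.Adj u v → u ∈ V₁ ∧ v ∈ V₁) (hE₂ : ∀ u v, G₂.Adj u v → u ∈ V₂ ∧ v ∈ V₂)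
    (hclique : ∀ u ∈ V₁ ∩ V₂, ∀ v ∈ V₁ ∩ V₂, u ≠ v → G₁.Adj u v ∧ G₂.Adj u v)
    (h₁ : gramDimLE (G₁.induce V₁) k) (h₂ : gramDimLE (G₂.induce V₂) k) :
    gramDimLE (G₁ ⊔ G₂) k := by
  rw [gramDimLE_iff_exists_gram] at h₁ h₂ ⊢
  intro X hX
  obtain ⟨u, hu⟩ := h₁ _ (hX.submatrix (↑))
  obtain ⟨w, hw⟩ := h₂ _ (hX.submatrix (↑))
  have hclique' (a b : ↥(V₁ ∩ V₂)) (hab : a ≠ b) := hclique a a.2 b b.2 (Subtype.coe_ne_coe.2 hab)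
  have hinter : gram ℝ (w ∘ inclusion inter_subset_right) =
      gram ℝ (u ∘ inclusion inter_subset_left) :=
    (hw.submatrix_eq (f := inclusion inter_subset_right) fun a b hab => (hclique' a b hab).2).trans
      (hu.submatrix_eq (f := inclusion inter_subset_left) fun a b hab => (hclique' a b hab).1).symm
  obtain ⟨v, hv₁, hv₂⟩ := exists_glue_of_gram_eq_on_inter hcover u w hinter
  rw [← hv₁] at hu
  rw [← hv₂] at hw
  exact ⟨v, agreesOn_sup hcover hE₁ hE₂ hu hw⟩

end Graph

theorem gramDim_cliqueSum_general {V : Type*} [Fintype V]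
    (G G₁ G₂ : SimpleGraph V) (V₁ V₂ : Set V) [Fintype ↥V₁] [Fintype ↥V₂]
    (hcover : V₁ ∪ V₂ = Set.univ)
    (hE₁ : ∀ u v, G₁.Adj u v → u ∈ V₁ ∧ v ∈ V₁)
    (hE₂ : ∀ u v, G₂.Adj u v → u ∈ V₂ ∧ v ∈ V₂)
    (hclique : ∀ u ∈ V₁ ∩ V₂, ∀ v ∈ V₁ ∩ V₂, u ≠ v → G₁.Adj u v ∧ G₂.Adj u v)
    (hG : G = G₁ ⊔ G₂) :
    gramDim G = max (gramDim (G₁.induce V₁)) (gramDim (G₂.induce V₂)) := by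
  subst hG
  have hgd := gramDim_le_iff.mp (le_refl (gramDim (G₁ ⊔ G₂)))
  refine le_antisymm (gramDim_le_iff.mpr ?_) (max_le ?_ ?_)
  · exact gramDimLE_sup_of_isClique hcover hE₁ hE₂ hclique
      (gramDim_le_iff.mp (le_max_left _ _)) (gramDim_le_iff.mp (le_max_right _ _))
  · exact gramDim_le_iff.mpr ((hgd.anti le_sup_left).induce V₁)
  · exact gramDim_le_iff.mpr ((hgd.anti le_sup_right).induce V₂)

/-- If `G` is the clique sum of `G₁` (with vertex set `V₁`) and `G₂` (with vertex set `V₂`),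
i.e. `G = G₁ ⊔ G₂` where `V₁ ∩ V₂` is a clique in both `G₁` and `G₂`, then
`gd(G) = max (gd(G₁), gd(G₂))`. -/
theorem gramDim_cliqueSum {V : Type*} [Fintype V] [DecidableEq V]
    (G G₁ G₂ : SimpleGraph V) (V₁ V₂ : Set V) [Fintype ↥V₁] [Fintype ↥V₂]
    (hcover : V₁ ∪ V₂ = Set.univ)
    (hE₁ : ∀ u v, G₁.Adj u v → u ∈ V₁ ∧ v ∈ V₁)
    (hE₂ : ∀ u v, G₂.Adj u v → u ∈ V₂ ∧ v ∈ V₂)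
    (hclique : ∀ u ∈ V₁ ∩ V₂, ∀ v ∈ V₁ ∩ V₂, u ≠ v → G₁.Adj u v ∧ G₂.Adj u v)
    (hG : G = G₁ ⊔ G₂) :
    gramDim G = max (gramDim (G₁.induce V₁)) (gramDim (G₂.induce V₂)) :=
  gramDim_cliqueSum_general G G₁ G₂ V₁ V₂ hcover hE₁ hE₂ hclique hG
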